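/- arXiv:1506.04728 — 3 statements merged into one kernel-verified Lean document; each statement's English description precedes it below -/
import Mathlib

section
/- Let f be a holomorphic function on {z ∈ ℂ : |z| > 1} such that f(w) → 0 as |w| → ∞. Then for every z with |z| > 1, ∫_{−π}^{π} f(e^{−iθ} z)² dθ = 0. -/
open MeasureTheory ProbabilityTheory Filter Topology

noncomputable section

/-- If `f` is holomorphic on `{|z| > 1}` and `f(w) → 0` as `|w| → ∞`, then for
every `z` with `|z| > 1` one has `∫_{-π}^{π} f(e^{-iθ} z)² dθ = 0`. -/
theorem integral_sq_zero (f : ℂ → ℂ)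
    (hf : DifferentiableOn ℂ f {z : ℂ | 1 < ‖z‖})
    (hlim : ∀ ε : ℝ, 0 < ε → ∃ R : ℝ, 1 < R ∧
      ∀ w : ℂ, R < ‖w‖ → ‖f w‖ < ε) :
    ∀ z : ℂ, 1 < ‖z‖ →
      (∫ θ in (-Real.pi)..Real.pi,
        f (Complex.exp (-((θ : ℂ) * Complex.I)) * z) ^ 2) = 0 := by
  intro z hz
  have hzpos : (0 : ℝ) < ‖z‖ := lt_trans one_pos hz
  set g : ℂ → ℂ := Function.update (fun u => f (z / u) ^ 2) 0 0 with hg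
  have hg0 : g 0 = 0 := Function.update_self _ _ _
  -- continuity of g at 0
  have hcont : ContinuousAt g 0 := by
    have : Filter.Tendsto g (𝓝 0) (𝓝 0) := by
      rw [Metric.tendsto_nhds]
      intro ε hε
      obtain ⟨R, hR1, hR⟩ := hlim (Real.sqrt ε) (Real.sqrt_pos.mpr hε)
      have hRpos : (0 : ℝ) < R := lt_trans one_pos hR1
      rw [Metric.eventually_nhds_iff]
      refine ⟨‖z‖ / R, div_pos hzpos hRpos, ?_⟩
      intro u hu
      rw [dist_zero_right] at hu ⊢
      rcases eq_or_ne u 0 with rfl | hune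
      · simpa [hg0] using hε
      · have hgu : g u = f (z / u) ^ 2 := Function.update_of_ne hune _ _
        have hupos : (0 : ℝ) < ‖u‖ := by
          simpa [norm_pos_iff] using hune
        have habs : R < ‖z / u‖ := by
          rw [norm_div, lt_div_iff₀ hupos]
          have := (lt_div_iff₀ hRpos).mp (by simpa using hu)
          linarith
        have hfb := hR _ habs
        have hnn : (0 : ℝ) ≤ ‖f (z / u)‖ := norm_nonneg _
        calc ‖g u‖ = ‖f (z / u)‖ ^ 2 := by
              rw [hgu]; simp [norm_pow]
          _ < Real.sqrt ε ^ 2 := by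
              exact pow_lt_pow_left₀ hfb hnn (by norm_num)
          _ = ε := Real.sq_sqrt hε.le
    simpa [ContinuousAt, hg0] using this
  -- differentiability on the punctured ball
  have hdiff : DifferentiableOn ℂ g (Metric.ball 0 (‖z‖) \ {0}) := by
    have hmap : Set.MapsTo (fun u : ℂ => z / u) (Metric.ball 0 (‖z‖) \ {0})
        {w : ℂ | 1 < ‖w‖} := by
      intro u hu
      have hune : u ≠ 0 := hu.2
      have hupos : (0 : ℝ) < ‖u‖ := by
        simpa [norm_pos_iff] using hune
      have hub : ‖u‖ < ‖z‖ := by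
        simpa [Complex.dist_eq] using hu.1
      simp only [Set.mem_setOf_eq, norm_div]
      rw [lt_div_iff₀ hupos]
      simpa using hub
    have hdiv : DifferentiableOn ℂ (fun u : ℂ => z / u)
        (Metric.ball 0 (‖z‖) \ {0}) := fun u hu =>
      ((differentiableAt_const z).div differentiableAt_id hu.2).differentiableWithinAt
    have : DifferentiableOn ℂ (fun u : ℂ => f (z / u) ^ 2)
        (Metric.ball 0 (‖z‖) \ {0}) := (hf.comp hdiv hmap).pow 2
    exact this.congr fun u hu => Function.update_of_ne hu.2 _ _
  have hball : Metric.ball (0 : ℂ) (‖z‖) ∈ 𝓝 (0 : ℂ) :=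
    Metric.ball_mem_nhds _ hzpos
  have hdg : DifferentiableOn ℂ g (Metric.ball 0 (‖z‖)) :=
    (Complex.differentiableOn_compl_singleton_and_continuousAt_iff hball).mp ⟨hdiff, hcont⟩
  -- Cauchy on the unit circle
  have hsub : Metric.closedBall (0 : ℂ) 1 ⊆ Metric.ball 0 (‖z‖) :=
    Metric.closedBall_subset_ball hz
  have hdc : DiffContOnCl ℂ g (Metric.ball 0 1) := by
    refine ⟨hdg.mono (Metric.ball_subset_ball hz.le), ?_⟩
    rw [closure_ball (0 : ℂ) one_ne_zero]
    exact (hdg.continuousOn).mono hsub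
  have key := hdc.circleIntegral_sub_inv_smul (Metric.mem_ball_self one_pos)
  rw [hg0, smul_zero] at key
  rw [circleIntegral] at key
  simp only [deriv_circleMap, smul_eq_mul, sub_zero] at key
  have h2 : ∀ θ : ℝ, circleMap 0 1 θ * Complex.I *
      ((circleMap 0 1 θ)⁻¹ * g (circleMap 0 1 θ)) = Complex.I * g (circleMap 0 1 θ) := by
    intro θ
    have hne : circleMap 0 1 θ ≠ 0 := circleMap_ne_center one_ne_zero
    field_simp
  simp only [h2] at key
  rw [intervalIntegral.integral_const_mul] at key
  have key2 : (∫ θ in (0 : ℝ)..2 * Real.pi, g (circleMap 0 1 θ)) = 0 :=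
    (mul_eq_zero.mp key).resolve_left Complex.I_ne_zero
  -- periodicity
  have hper : Function.Periodic (fun θ : ℝ => g (circleMap 0 1 θ)) (2 * Real.pi) :=
    (periodic_circleMap 0 1).comp g
  have hshift := hper.intervalIntegral_add_eq (-Real.pi) 0
  have hπ : -Real.pi + 2 * Real.pi = Real.pi := by ring
  rw [hπ, zero_add] at hshift
  -- identify the integrand
  have hfun : (fun θ : ℝ => f (Complex.exp (-((θ : ℂ) * Complex.I)) * z) ^ 2) =
      fun θ : ℝ => g (circleMap 0 1 θ) := by
    funext θ
    have hne : circleMap 0 1 θ ≠ 0 := circleMap_ne_center one_ne_zero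
    have : g (circleMap 0 1 θ) = f (z / circleMap 0 1 θ) ^ 2 :=
      Function.update_of_ne hne _ _
    rw [this, circleMap_zero]
    congr 2
    rw [Complex.exp_neg]
    field_simp
    simp
  calc (∫ θ in (-Real.pi)..Real.pi, f (Complex.exp (-((θ : ℂ) * Complex.I)) * z) ^ 2)
      = ∫ θ in (-Real.pi)..Real.pi, g (circleMap 0 1 θ) := by rw [hfun]
    _ = ∫ θ in (0 : ℝ)..2 * Real.pi, g (circleMap 0 1 θ) := hshift
    _ = 0 := key2
end
end

section
/- There exists an absolute constant C > 0 such that for all sufficiently small δ > 0, for every particle P as in the setup with that δ, for all σ > 0, a ∈ [−π, π), all n ≥ 1 and all 1 ≤ k ≤ n, almost surely |X^σ_{k,n}(a)| ≤ C/√c and |Y^σ_{k,n}(a)| ≤ C/√c. -/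
open MeasureTheory ProbabilityTheory Filter Topology

noncomputable section

/-- Argument of a complex number, valued in `[-π, π)`. -/
def argNeg (z : ℂ) : ℝ := if Complex.arg z = Real.pi then -Real.pi else Complex.arg z

/-- The closed unit disc together with the particle `P`. -/
def Kset (P : Set ℂ) : Set ℂ := {z : ℂ | ‖z‖ ≤ 1} ∪ P

/-- The exterior `D₀` of the closed unit disc. -/
def D0 : Set ℂ := {z : ℂ | 1 < ‖z‖}

/-- The complement `D` of `K = closed unit disc ∪ P` in the plane. -/
def Dset (P : Set ℂ) : Set ℂ := (Kset P)ᶜ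

/-- The deterministic data of the Hastings–Levitov model: a particle `P` of diameter
at most `δ` attached to the unit disc at `1`, its logarithmic capacity `c`, and the
attaching conformal map `F : D₀ → D` with inverse `G`. -/
structure HLSetup (δ : ℝ) where
  P : Set ℂ
  c : ℝ
  F : ℂ → ℂ
  G : ℂ → ℂ
  P_nonempty : P.Nonempty
  P_compact : IsCompact P
  P_connected : IsConnected P
  P_outside : ∀ z ∈ P, 1 ≤ ‖z‖
  P_limit : (1 : ℂ) ∈ closure (P \ {1})
  P_small : P ⊆ {z : ℂ | ‖z - 1‖ ≤ δ}
  P_tip : (1 + (δ : ℂ)) ∈ P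
  P_symm : P = (fun z => (starRingEnd ℂ) z) '' P
  simply_connected :
    SimplyConnectedSpace ↥{w : OnePoint ℂ | w ∉ (fun z : ℂ => (z : OnePoint ℂ)) '' Kset P}
  c_pos : 0 < c
  F_holo : DifferentiableOn ℂ F D0
  F_bij : Set.BijOn F D0 (Dset P)
  F_bound : ∃ R M : ℝ, ∀ z : ℂ, R ≤ ‖z‖ →
      ‖F z - (Real.exp c : ℂ) * z‖ ≤ M
  G_left : ∀ z ∈ D0, G (F z) = z
  G_right : ∀ w ∈ Dset P, F (G w) = w

/-- The randomised Hastings–Levitov model: the setup together with i.i.d. uniform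
attachment angles `Θ_k` on `[-π, π)`. -/
structure HLModel (δ : ℝ) (Ω : Type*) [MeasurableSpace Ω] (μ : Measure Ω)
    extends HLSetup δ where
  Θ : ℕ → Ω → ℝ
  Θ_meas : ∀ k, Measurable (Θ k)
  Θ_unif : ∀ k, Measure.map (Θ k) μ =
      (ENNReal.ofReal (2 * Real.pi))⁻¹ • volume.restrict (Set.Ico (-Real.pi) Real.pi)
  Θ_indep : iIndepFun Θ μ

namespace HLModel

variable {δ : ℝ} {Ω : Type*} [MeasurableSpace Ω] {μ : Measure Ω}

/-- The rotated map `F_k(z) = e^{iΘ_k} F (e^{-iΘ_k} z)`. -/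
def Fk (H : HLModel δ Ω μ) (k : ℕ) (ω : Ω) (z : ℂ) : ℂ :=
  Complex.exp ((H.Θ k ω : ℂ) * Complex.I) *
    H.F (Complex.exp (-((H.Θ k ω : ℂ) * Complex.I)) * z)

/-- The inverse rotated map `G_k = F_k⁻¹`. -/
def Gk (H : HLModel δ Ω μ) (k : ℕ) (ω : Ω) (z : ℂ) : ℂ :=
  Complex.exp ((H.Θ k ω : ℂ) * Complex.I) *
    H.G (Complex.exp (-((H.Θ k ω : ℂ) * Complex.I)) * z)

/-- `Φ_n = F_1 ∘ ⋯ ∘ F_n`. -/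
def Phi (H : HLModel δ Ω μ) : ℕ → Ω → ℂ → ℂ
  | 0 => fun _ z => z
  | n + 1 => fun ω z => Phi H n ω (H.Fk (n + 1) ω z)

/-- `Γ_n = Φ_n⁻¹ = G_n ∘ ⋯ ∘ G_1`. -/
def Gamma (H : HLModel δ Ω μ) : ℕ → Ω → ℂ → ℂ
  | 0 => fun _ z => z
  | n + 1 => fun ω z => H.Gk (n + 1) ω (Gamma H n ω z)

/-- Auxiliary chain: `Zc j = F_{n-j+1} ∘ ⋯ ∘ F_n (e^{ia+σ})`. -/
def Zc (H : HLModel δ Ω μ) (σ a : ℝ) (n : ℕ) (ω : Ω) : ℕ → ℂ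
  | 0 => Complex.exp ((a : ℂ) * Complex.I + (σ : ℂ))
  | j + 1 => H.Fk (n - j) ω (Zc H σ a n ω j)

/-- `Z^σ_{k,n}(a) = F_{k+1} ∘ ⋯ ∘ F_n (e^{ia+σ})`. -/
def Z (H : HLModel δ Ω μ) (σ a : ℝ) (k n : ℕ) (ω : Ω) : ℂ := Zc H σ a n ω (n - k)

/-- `X^σ_{k,n}(a) = (1/√c)(log |F(e^{-iΘ_k} Z^σ_{k,n}(a)) / (e^{-iΘ_k} Z^σ_{k,n}(a))| - c)`. -/
def X (H : HLModel δ Ω μ) (σ a : ℝ) (k n : ℕ) (ω : Ω) : ℝ :=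
  (Real.sqrt H.c)⁻¹ *
    (Real.log ‖
        (H.F (Complex.exp (-((H.Θ k ω : ℂ) * Complex.I)) * H.Z σ a k n ω) /
          (Complex.exp (-((H.Θ k ω : ℂ) * Complex.I)) * H.Z σ a k n ω))‖ - H.c)

/-- `Y^σ_{k,n}(a) = (1/√c) Arg (F(e^{-iΘ_k} Z^σ_{k,n}(a)) / (e^{-iΘ_k} Z^σ_{k,n}(a)))`,
with `Arg` valued in `[-π, π)`. -/
def Y (H : HLModel δ Ω μ) (σ a : ℝ) (k n : ℕ) (ω : Ω) : ℝ :=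
  (Real.sqrt H.c)⁻¹ *
    argNeg (H.F (Complex.exp (-((H.Θ k ω : ℂ) * Complex.I)) * H.Z σ a k n ω) /
      (Complex.exp (-((H.Θ k ω : ℂ) * Complex.I)) * H.Z σ a k n ω))

/-- `ℱ_{k,n}`, the σ-algebra generated by `Θ_k, …, Θ_n`. -/
def Flt (H : HLModel δ Ω μ) (k n : ℕ) : MeasurableSpace Ω :=
  ⨆ j ∈ Set.Icc k n, MeasurableSpace.comap (H.Θ j) inferInstance

/-- The event `E_n(ε)`. -/
def goodEventN (H : HLModel δ Ω μ) (ε : ℝ) (n : ℕ) : Set Ω :=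
  {ω | ∀ z : ℂ, Real.exp (5 * ε) ≤ ‖z‖ →
      ‖(Real.exp (-(H.c * n)) : ℂ) * H.Phi n ω z - z‖ < ε * Real.exp (6 * ε)} ∩
  {ω | ∀ z : ℂ, Real.exp (H.c * n + 4 * ε) ≤ ‖z‖ →
      ‖(Real.exp (H.c * n) : ℂ) * H.Gamma n ω z - z‖
        < ε * Real.exp (5 * ε + H.c * n)}

/-- The good event `E(m, ε) = ⋂_{n=1}^m E_n(ε)`. -/
def goodEvent (H : HLModel δ Ω μ) (ε : ℝ) (m : ℕ) : Set Ω :=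
  ⋂ n ∈ Set.Icc 1 m, H.goodEventN ε n

end HLModel

/-- `ε = δ^{2/3} log (1/δ)`. -/
def epsOf (δ : ℝ) : ℝ := δ ^ ((2 : ℝ) / 3) * Real.log (1 / δ)

/-- `m = ⌊δ^{-6}⌋`. -/
def mOf (δ : ℝ) : ℕ := ⌊δ ^ (-(6 : ℝ))⌋₊

noncomputable def Complex.abs : AbsoluteValue ℂ ℝ where
  toFun z := ‖z‖
  map_mul' := norm_mul
  nonneg' := norm_nonneg
  eq_zero' _ := norm_eq_zero
  add_le' := norm_add_le

lemma Complex.norm_eq_abs (z : ℂ) : ‖z‖ = Complex.abs z := rfl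

lemma Complex.abs_ofReal (r : ℝ) : Complex.abs (r : ℂ) = |r| := by
  show ‖(r : ℂ)‖ = |r|
  simp

lemma Complex.continuous_abs : Continuous Complex.abs := continuous_norm

lemma Complex.abs_two : Complex.abs 2 = 2 := Complex.norm_two

lemma Complex.abs_exp_ofReal_mul_I (x : ℝ) : Complex.abs (Complex.exp (x * Complex.I)) = 1 :=
  Complex.norm_exp_ofReal_mul_I x

lemma Complex.abs_exp' (z : ℂ) : Complex.abs (Complex.exp z) = Real.exp z.re :=
  Complex.norm_exp z

attribute [simp] Complex.norm_eq_abs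

namespace HLCrude

open Set Metric

lemma isPreconnected_exterior {B : ℝ} (hB : 0 ≤ B) :
    IsPreconnected {z : ℂ | B < Complex.abs z} := by
  have hrank : 1 < Module.rank ℝ ℂ := by
    rw [Complex.rank_real_complex]; norm_num
  set L : Set ℂ := (fun t : ℝ => (t : ℂ)) '' Set.Ioi B with hL
  have hLpre : IsPreconnected L :=
    (isPreconnected_Ioi).image _ Complex.continuous_ofReal.continuousOn
  have hmemL : ∀ t : ℝ, B < t → (t : ℂ) ∈ L := fun t ht => ⟨t, ht, rfl⟩
  have habs : ∀ t : ℝ, B < t → Complex.abs (t : ℂ) = t := by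
    intro t ht
    rw [Complex.abs_ofReal, abs_of_pos (lt_of_le_of_lt hB ht)]
  have key : {z : ℂ | B < Complex.abs z} =
      ⋃₀ {s | ∃ r : ℝ, B < r ∧ s = Metric.sphere (0:ℂ) r ∪ L} := by
    ext z
    constructor
    · intro hz
      refine ⟨Metric.sphere (0:ℂ) (Complex.abs z) ∪ L, ⟨Complex.abs z, hz, rfl⟩, ?_⟩
      exact Or.inl (by simp [Complex.dist_eq])
    · rintro ⟨s, ⟨r, hr, rfl⟩, hzs⟩
      rcases hzs with h | h
      · have : dist z 0 = r := h
        have : Complex.abs z = r := by simpa [Complex.dist_eq] using this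
        simpa [this] using hr
      · rcases h with ⟨t, ht, rfl⟩
        simp only [Set.mem_setOf_eq, habs t ht]
        exact ht
  rw [key]
  apply isPreconnected_sUnion ((B+1 : ℝ) : ℂ)
  · rintro s ⟨r, hr, rfl⟩
    exact Or.inr (hmemL _ (by linarith))
  · rintro s ⟨r, hr, rfl⟩
    refine IsPreconnected.union ((r : ℝ) : ℂ) ?_ (hmemL r hr) ?_ hLpre
    · simp [Complex.dist_eq, habs r hr, abs_of_pos (lt_of_le_of_lt hB hr)]
    · exact isPreconnected_sphere hrank 0 r

lemma D0_open : IsOpen D0 := isOpen_lt continuous_const Complex.continuous_abs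

lemma Dset_subset (P : Set ℂ) : Dset P ⊆ D0 := by
  intro z hz
  by_contra h
  exact hz (Or.inl (show Complex.abs z ≤ 1 from not_lt.mp h))

variable {δ : ℝ} (S : HLSetup δ)

lemma F_mem {z : ℂ} (hz : z ∈ D0) : S.F z ∈ D0 := Dset_subset _ (S.F_bij.mapsTo hz)

lemma F_abs {z : ℂ} (hz : 1 < Complex.abs z) : 1 < Complex.abs (S.F z) := F_mem S hz

lemma F_ne {z : ℂ} (hz : 1 < Complex.abs z) : S.F z ≠ 0 := by
  intro h
  have := F_abs S hz
  rw [h] at this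
  simp at this
  linarith

lemma F_diffAt {z : ℂ} (hz : z ∈ D0) : DifferentiableAt ℂ S.F z :=
  S.F_holo.differentiableAt (D0_open.mem_nhds hz)

lemma F_isOpenMap : ∀ s ⊆ D0, IsOpen s → IsOpen (S.F '' s) := by
  have ha : AnalyticOnNhd ℂ S.F D0 := S.F_holo.analyticOnNhd D0_open
  have h2 : (2:ℂ) ∈ D0 := by
    show (1:ℝ) < Complex.abs 2
    rw [Complex.abs_two]; norm_num
  have h3 : (3:ℂ) ∈ D0 := by
    show (1:ℝ) < Complex.abs 3
    have : Complex.abs 3 = 3 := by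
      rw [show ((3:ℂ)) = ((3:ℝ):ℂ) by norm_num, Complex.abs_ofReal]
      norm_num
    rw [this]; norm_num
  rcases ha.is_constant_or_isOpen (isPreconnected_exterior zero_le_one) with h | h
  · exfalso
    obtain ⟨w, hw⟩ := h
    have := S.F_bij.injOn h2 h3 (by rw [hw 2 h2, hw 3 h3])
    norm_num at this
  · exact h

end HLCrude
namespace HLCrude

open Set Metric

variable {δ : ℝ} (S : HLSetup δ)

lemma one_le_expc : 1 ≤ Real.exp S.c := by
  have := Real.exp_le_exp.mpr S.c_pos.le
  rwa [Real.exp_zero] at this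

lemma abs_coe_mul (t : ℝ) (ht : 0 < t) (ζ : ℂ) :
    Complex.abs ((t : ℂ) * ζ) = t * Complex.abs ζ := by
  rw [map_mul, Complex.abs_ofReal, abs_of_pos ht]

lemma F_low (R M : ℝ)
    (hRM : ∀ z : ℂ, R ≤ Complex.abs z → Complex.abs (S.F z - (Real.exp S.c : ℂ) * z) ≤ M)
    {ζ : ℂ} (hζ : R ≤ Complex.abs ζ) :
    Real.exp S.c * Complex.abs ζ - M ≤ Complex.abs (S.F ζ) := by
  have h := hRM ζ hζ
  have h2 : Complex.abs ((Real.exp S.c : ℂ) * ζ) - Complex.abs (S.F ζ) ≤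
      Complex.abs ((Real.exp S.c : ℂ) * ζ - S.F ζ) := by
    simpa [Complex.norm_eq_abs] using
      norm_sub_norm_le ((Real.exp S.c : ℂ) * ζ) (S.F ζ)
  rw [abs_coe_mul _ (Real.exp_pos _) ζ] at h2
  have h3 : Complex.abs ((Real.exp S.c : ℂ) * ζ - S.F ζ) =
      Complex.abs (S.F ζ - (Real.exp S.c : ℂ) * ζ) := by
    simpa [Complex.norm_eq_abs] using norm_sub_rev ((Real.exp S.c : ℂ) * ζ) (S.F ζ)
  linarith [h3 ▸ h2]

lemma F_up (R M : ℝ)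
    (hRM : ∀ z : ℂ, R ≤ Complex.abs z → Complex.abs (S.F z - (Real.exp S.c : ℂ) * z) ≤ M)
    {ζ : ℂ} (hζ : R ≤ Complex.abs ζ) :
    Complex.abs (S.F ζ) ≤ Real.exp S.c * Complex.abs ζ + M := by
  have h := hRM ζ hζ
  have h2 : Complex.abs (S.F ζ) - Complex.abs ((Real.exp S.c : ℂ) * ζ) ≤
      Complex.abs (S.F ζ - (Real.exp S.c : ℂ) * ζ) := by
    simpa [Complex.norm_eq_abs] using norm_sub_norm_le (S.F ζ) ((Real.exp S.c : ℂ) * ζ)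
  rw [abs_coe_mul _ (Real.exp_pos _) ζ] at h2
  linarith

lemma coverage (R M : ℝ) (hR : 2 ≤ R) (hM : 0 ≤ M)
    (hRM : ∀ z : ℂ, R ≤ Complex.abs z → Complex.abs (S.F z - (Real.exp S.c : ℂ) * z) ≤ M) :
    ∀ w : ℂ, Real.exp S.c * (R + 2) + M < Complex.abs w →
      ∃ ζ : ℂ, R + 2 < Complex.abs ζ ∧ S.F ζ = w := by
  have he1 := one_le_expc S
  set B' := Real.exp S.c * (R + 2) + M with hB'
  set T : Set ℂ := {ζ | R + 2 ≤ Complex.abs ζ} with hT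
  have hTD0 : T ⊆ D0 := fun ζ hζ => by
    show 1 < Complex.abs ζ
    have : R + 2 ≤ Complex.abs ζ := hζ
    linarith
  have hTclosed : IsClosed T := isClosed_le continuous_const Complex.continuous_abs
  -- closure property
  have hcl : ∀ w : ℂ, B' < Complex.abs w → w ∈ closure (S.F '' T) → w ∈ S.F '' T := by
    intro w hw hwcl
    set r₀ := (Complex.abs w + 1 + M) / Real.exp S.c with hr₀
    have hKc : IsCompact (T ∩ Metric.closedBall 0 r₀) :=
      (isCompact_closedBall _ _).inter_left hTclosed
    have hsubD : T ∩ Metric.closedBall 0 r₀ ⊆ D0 := fun ζ hζ => hTD0 hζ.1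
    have himc : IsCompact (S.F '' (T ∩ Metric.closedBall 0 r₀)) :=
      hKc.image_of_continuousOn (S.F_holo.continuousOn.mono hsubD)
    have hsmall : S.F '' T ∩ Metric.ball w 1 ⊆ S.F '' (T ∩ Metric.closedBall 0 r₀) := by
      rintro x ⟨⟨ζ, hζT, rfl⟩, hxball⟩
      refine ⟨ζ, ⟨hζT, ?_⟩, rfl⟩
      have hd : Complex.abs (S.F ζ - w) < 1 := by
        simpa [Complex.dist_eq] using (mem_ball.mp hxball)
      have h1 : Complex.abs (S.F ζ) ≤ Complex.abs w + 1 := by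
        have := norm_sub_norm_le (S.F ζ) w
        simp only [Complex.norm_eq_abs] at this
        linarith
      have hζR : R ≤ Complex.abs ζ := by
        have : R + 2 ≤ Complex.abs ζ := hζT
        linarith
      have h2 := F_low S R M hRM hζR
      have h3 : Real.exp S.c * Complex.abs ζ ≤ Complex.abs w + 1 + M := by linarith
      have h4 : Complex.abs ζ ≤ r₀ := by
        rw [hr₀, le_div_iff₀ (Real.exp_pos _)]
        linarith [h3]
      simpa [Complex.dist_eq, mem_closedBall] using h4
    have hw2 : w ∈ closure (S.F '' (T ∩ Metric.closedBall 0 r₀)) := by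
      rw [_root_.mem_closure_iff] at hwcl ⊢
      intro o ho hwo
      obtain ⟨x, hx⟩ := hwcl (o ∩ Metric.ball w 1) (ho.inter isOpen_ball)
        ⟨hwo, mem_ball_self one_pos⟩
      exact ⟨x, hx.1.1, hsmall ⟨hx.2, hx.1.2⟩⟩
    exact Set.image_mono Set.inter_subset_left (himc.isClosed.closure_subset hw2)
  -- connectedness argument
  intro w hw
  set u := S.F '' {ζ : ℂ | R + 2 < Complex.abs ζ} with hu
  set v := {x : ℂ | B' < Complex.abs x} ∩ (closure (S.F '' T))ᶜ with hv
  have hB'0 : 0 ≤ B' :=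
    add_nonneg (mul_nonneg (Real.exp_pos _).le (by linarith)) hM
  have hVpre : IsPreconnected {x : ℂ | B' < Complex.abs x} := isPreconnected_exterior hB'0
  have huopen : IsOpen u := F_isOpenMap S _
    (fun ζ hζ => by
      show 1 < Complex.abs ζ
      have : R + 2 < Complex.abs ζ := hζ
      linarith)
    (isOpen_lt continuous_const Complex.continuous_abs)
  have hvopen : IsOpen v :=
    (isOpen_lt continuous_const Complex.continuous_abs).inter isClosed_closure.isOpen_compl
  have hsub : {x : ℂ | B' < Complex.abs x} ⊆ u ∪ v := by
    intro x hx
    by_cases hc : x ∈ closure (S.F '' T)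
    · obtain ⟨ζ, hζ, rfl⟩ := hcl x hx hc
      left
      refine ⟨ζ, ?_, rfl⟩
      rcases lt_or_eq_of_le (show R + 2 ≤ Complex.abs ζ from hζ) with h | h
      · exact h
      · exfalso
        have hζR : R ≤ Complex.abs ζ := by linarith
        have := F_up S R M hRM hζR
        rw [← h] at this
        have hx' : B' < Complex.abs (S.F ζ) := hx
        rw [hB'] at hx'
        linarith
    · exact Or.inr ⟨hx, hc⟩
  have hdisj : Disjoint u v := by
    rw [Set.disjoint_left]
    rintro x ⟨ζ, hζ, rfl⟩ hxv
    exact hxv.2 (subset_closure ⟨ζ, show R + 2 ≤ Complex.abs ζ from le_of_lt hζ, rfl⟩)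
  have hne : ({x : ℂ | B' < Complex.abs x} ∩ u).Nonempty := by
    set t : ℝ := R + 2 + 2 * M + 1 with ht
    have ht0 : 0 < t := by linarith
    have habst : Complex.abs ((t : ℂ)) = t := by
      rw [Complex.abs_ofReal, abs_of_pos ht0]
    have hζR : R ≤ Complex.abs ((t : ℂ)) := by rw [habst]; linarith
    have hlow := F_low S R M hRM hζR
    refine ⟨S.F (t : ℂ), ?_, ⟨(t : ℂ), ?_, rfl⟩⟩
    · show B' < Complex.abs (S.F (t : ℂ))
      rw [habst] at hlow
      have : B' < Real.exp S.c * t - M := by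
        rw [hB', ht]
        nlinarith [he1, hM]
      linarith
    · show R + 2 < Complex.abs ((t : ℂ))
      rw [habst]; linarith
  have hfinal := hVpre.subset_left_of_subset_union huopen hvopen hdisj hsub hne
  obtain ⟨ζ, hζ, rfl⟩ := hfinal hw
  exact ⟨ζ, hζ, rfl⟩

lemma boundNear (R M : ℝ) (hR : 2 ≤ R) (hM : 0 ≤ M)
    (hRM : ∀ z : ℂ, R ≤ Complex.abs z → Complex.abs (S.F z - (Real.exp S.c : ℂ) * z) ≤ M)
    {z : ℂ} (hz : 1 < Complex.abs z) (hlt : Complex.abs z < R + 2) :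
    Complex.abs (S.F z) ≤ Real.exp S.c * (R + 2) + M := by
  by_contra h
  obtain ⟨ζ, hζ, heq⟩ := coverage S R M hR hM hRM (S.F z) (not_le.mp h)
  have hζD : ζ ∈ D0 := by
    show 1 < Complex.abs ζ
    linarith
  have := S.F_bij.injOn hζD hz heq
  rw [this] at hζ
  linarith

end HLCrude
namespace HLCrude

open Set Metric

variable {δ : ℝ} (S : HLSetup δ)

lemma nearBoundary (hδ : 0 < δ) (R M : ℝ) (hR : 2 ≤ R) (hM : 0 ≤ M)
    (hRM : ∀ z : ℂ, R ≤ Complex.abs z → Complex.abs (S.F z - (Real.exp S.c : ℂ) * z) ≤ M)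
    {ε : ℝ} (hε : 0 < ε) :
    ∃ η > 0, ∀ z : ℂ, 1 < Complex.abs z → Complex.abs z ≤ 1 + η →
      Complex.abs (S.F z) ≤ 1 + δ + ε := by
  by_contra hcon
  push_neg at hcon
  have hchoice : ∀ n : ℕ, ∃ z : ℂ, 1 < Complex.abs z ∧ Complex.abs z ≤ 1 + 1 / (n + 1) ∧
      1 + δ + ε < Complex.abs (S.F z) := by
    intro n
    obtain ⟨z, hz1, hz2, hz3⟩ := hcon (1 / (n + 1)) (by positivity)
    exact ⟨z, hz1, hz2, hz3⟩
  choose zs hz1 hz2 hz3 using hchoice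
  set B' := Real.exp S.c * (R + 2) + M with hB'
  have hFB : ∀ n : ℕ, Complex.abs (S.F (zs n)) ≤ B' := by
    intro n
    apply boundNear S R M hR hM hRM (hz1 n)
    have h1 : (1 : ℝ) / (n + 1) ≤ 1 := by
      rw [div_le_one (by positivity)]
      linarith [Nat.cast_nonneg (α := ℝ) n]
    have := hz2 n
    linarith
  set Cs : Set ℂ := Metric.closedBall 0 B' ∩ {w : ℂ | 1 + δ + ε ≤ Complex.abs w} with hCs
  have hCcomp : IsCompact Cs :=
    (isCompact_closedBall _ _).inter_right (isClosed_le continuous_const Complex.continuous_abs)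
  have hmem : ∀ n, S.F (zs n) ∈ Cs := by
    intro n
    constructor
    · simp only [Metric.mem_closedBall, Complex.dist_eq, sub_zero]
      exact hFB n
    · exact le_of_lt (hz3 n)
  obtain ⟨w, hwC, φ, hφ, hconv⟩ := hCcomp.tendsto_subseq hmem
  have hwabs : 1 + δ + ε ≤ Complex.abs w := hwC.2
  have hwD : w ∈ Dset S.P := by
    intro hwK
    rcases hwK with h | h
    · have : Complex.abs w ≤ 1 := h
      linarith
    · have := S.P_small h
      have h1 : Complex.abs (w - 1) ≤ δ := this
      have h2 : Complex.abs w - Complex.abs 1 ≤ Complex.abs (w - 1) := by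
        simpa [Complex.norm_eq_abs] using norm_sub_norm_le w 1
      simp only [map_one] at h2
      linarith
  obtain ⟨z₀, hz₀D, hFz₀⟩ := S.F_bij.surjOn hwD
  have hz₀abs : 1 < Complex.abs z₀ := hz₀D
  set r : ℝ := (Complex.abs z₀ - 1) / 2 with hr
  have hrpos : 0 < r := by rw [hr]; linarith
  have hball : Metric.ball z₀ r ⊆ D0 := by
    intro ζ hζ
    show 1 < Complex.abs ζ
    have hd : Complex.abs (ζ - z₀) < r := by
      simpa [Complex.dist_eq] using mem_ball.mp hζ
    have : Complex.abs z₀ - Complex.abs ζ ≤ Complex.abs (z₀ - ζ) := by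
      simpa [Complex.norm_eq_abs] using norm_sub_norm_le z₀ ζ
    have habs : Complex.abs (z₀ - ζ) = Complex.abs (ζ - z₀) := by
      simpa using norm_sub_rev z₀ ζ
    rw [habs] at this
    have := hd
    rw [hr] at *
    linarith
  have hOp : IsOpen (S.F '' Metric.ball z₀ r) :=
    F_isOpenMap S _ hball isOpen_ball
  have hwmem : w ∈ S.F '' Metric.ball z₀ r :=
    ⟨z₀, mem_ball_self hrpos, hFz₀⟩
  have hev : ∀ᶠ n in Filter.atTop, S.F (zs (φ n)) ∈ S.F '' Metric.ball z₀ r :=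
    hconv.eventually (hOp.eventually_mem hwmem)
  obtain ⟨N, hN⟩ := Filter.eventually_atTop.mp hev
  obtain ⟨N₂, hN₂⟩ : ∃ N₂ : ℕ, (1 : ℝ) / (N₂ + 1) < r := by
    obtain ⟨N₂, hN₂⟩ := exists_nat_gt (1 / r)
    refine ⟨N₂, ?_⟩
    rw [div_lt_iff₀ (by positivity)]
    have h1r : 1 / r < N₂ + 1 := by linarith
    calc (1 : ℝ) = r * (1 / r) := by field_simp
    _ < r * (N₂ + 1) := by
        apply mul_lt_mul_of_pos_left _ hrpos
        linarith
  set n := max N N₂ with hn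
  obtain ⟨ζ, hζball, hζeq⟩ := hN n (le_max_left _ _)
  have hζD0 : ζ ∈ D0 := hball hζball
  have hzsD0 : zs (φ n) ∈ D0 := hz1 (φ n)
  have heqz : ζ = zs (φ n) := S.F_bij.injOn hζD0 hzsD0 hζeq
  have hlow : 1 + r ≤ Complex.abs ζ := by
    have hd : Complex.abs (ζ - z₀) < r := by
      simpa [Complex.dist_eq] using mem_ball.mp hζball
    have h1 : Complex.abs z₀ - Complex.abs ζ ≤ Complex.abs (z₀ - ζ) := by
      simpa [Complex.norm_eq_abs] using norm_sub_norm_le z₀ ζ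
    have habs : Complex.abs (z₀ - ζ) = Complex.abs (ζ - z₀) := by
      simpa using norm_sub_rev z₀ ζ
    rw [habs] at h1
    rw [hr] at *
    linarith
  have hup : Complex.abs ζ ≤ 1 + 1 / (φ n + 1) := by
    rw [heqz]; exact hz2 (φ n)
  have hφn : (n : ℝ) ≤ (φ n : ℝ) := by
    exact_mod_cast hφ.le_apply
  have hN₂n : (N₂ : ℝ) ≤ (n : ℝ) := by exact_mod_cast le_max_right N N₂
  have hmono : (1 : ℝ) / (φ n + 1) ≤ 1 / (N₂ + 1) := by
    apply div_le_div_of_nonneg_left one_pos.le (by positivity)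
    linarith
  linarith

end HLCrude
namespace HLCrude

open Set Metric

variable {δ : ℝ} (S : HLSetup δ)

lemma hinvD0 (ζ : ℂ) (hζ0 : ζ ≠ 0) (hζ1 : Complex.abs ζ < 1) : 1 < Complex.abs ζ⁻¹ := by
  rw [map_inv₀]
  rw [lt_inv_comm₀ one_pos (by simpa using hζ0)]
  simpa using hζ1

lemma core_upper (R M : ℝ) (hR : 2 ≤ R) (hM : 0 ≤ M)
    (hRM : ∀ z : ℂ, R ≤ Complex.abs z → Complex.abs (S.F z - (Real.exp S.c : ℂ) * z) ≤ M)
    {ε η : ℝ} (hε : 0 < ε) (hη : 0 < η)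
    (Hη : ∀ z : ℂ, 1 < Complex.abs z → Complex.abs z ≤ 1 + η →
      Complex.abs (S.F z) ≤ 1 + δ + ε) (hδ : 0 < δ) :
    Real.exp S.c ≤ 1 + δ + ε ∧
      ∀ z : ℂ, 1 + η ≤ Complex.abs z → Complex.abs (S.F z) ≤ (1 + δ + ε) * Complex.abs z := by
  set B' := Real.exp S.c * (R + 2) + M with hB'
  set g : ℂ → ℂ := fun ζ => ζ * S.F ζ⁻¹ with hg
  -- differentiability on punctured ball
  have hgd : DifferentiableOn ℂ g (Metric.ball (0:ℂ) 1 \ {0}) := by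
    intro ζ hζ
    have hζ0 : ζ ≠ 0 := hζ.2
    have hζ1 : Complex.abs ζ < 1 := by
      simpa [Complex.dist_eq] using mem_ball.mp hζ.1
    have hζinv : (1:ℝ) < Complex.abs ζ⁻¹ := hinvD0 ζ hζ0 hζ1
    have : DifferentiableAt ℂ g ζ := by
      apply DifferentiableAt.mul differentiableAt_id
      exact (F_diffAt S hζinv).comp ζ (differentiableAt_inv hζ0)
    exact this.differentiableWithinAt
  -- boundedness
  have hgb : ∀ ζ ∈ Metric.ball (0:ℂ) 1 \ {0},
      Complex.abs (g ζ) ≤ Real.exp S.c + M + B' := by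
    intro ζ hζ
    have hζ0 : ζ ≠ 0 := hζ.2
    have hζ1 : Complex.abs ζ < 1 := by
      simpa [Complex.dist_eq] using mem_ball.mp hζ.1
    have hζa : 0 < Complex.abs ζ := by simpa using hζ0
    have hζinv : (1:ℝ) < Complex.abs ζ⁻¹ := hinvD0 ζ hζ0 hζ1
    have hB'0 : 0 ≤ B' := add_nonneg (mul_nonneg (Real.exp_pos _).le (by linarith)) hM
    rw [hg]
    simp only [map_mul]
    by_cases hcase : R ≤ Complex.abs ζ⁻¹
    · have := F_up S R M hRM hcase
      have hchain : Complex.abs ζ * Complex.abs (S.F ζ⁻¹) ≤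
          Complex.abs ζ * (Real.exp S.c * Complex.abs ζ⁻¹ + M) := by
        apply mul_le_mul_of_nonneg_left this hζa.le
      rw [map_inv₀] at hchain
      have heq : Complex.abs ζ * (Real.exp S.c * (Complex.abs ζ)⁻¹ + M) =
          Real.exp S.c + M * Complex.abs ζ := by
        field_simp
      rw [heq] at hchain
      have : M * Complex.abs ζ ≤ M := by nlinarith
      linarith
    · push_neg at hcase
      have hlt : Complex.abs ζ⁻¹ < R + 2 := by linarith
      have := boundNear S R M hR hM hRM hζinv hlt
      have hchain : Complex.abs ζ * Complex.abs (S.F ζ⁻¹) ≤ 1 * B' := by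
        apply mul_le_mul hζ1.le this (by positivity) (by norm_num)
      have he := Real.exp_pos S.c
      linarith
  -- update at zero
  set u : ℂ → ℂ := Function.update g 0 (limUnder (nhdsWithin 0 {(0:ℂ)}ᶜ) g) with hu
  have hudiff : DifferentiableOn ℂ u (Metric.ball (0:ℂ) 1) := by
    apply Complex.differentiableOn_update_limUnder_of_bddAbove
      (isOpen_ball.mem_nhds (by simp)) hgd
    refine ⟨Real.exp S.c + M + B', ?_⟩
    rintro x ⟨ζ, hζ, rfl⟩
    simpa [Complex.norm_eq_abs] using hgb ζ hζ
  -- limit at zero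
  have hlim : Filter.Tendsto g (nhdsWithin 0 {(0:ℂ)}ᶜ) (nhds ((Real.exp S.c : ℂ))) := by
    rw [← tendsto_sub_nhds_zero_iff]
    apply squeeze_zero_norm' (a := fun ζ : ℂ => M * ‖ζ‖)
    · have hmem : Metric.closedBall (0:ℂ) (1/R) ∈ nhds (0:ℂ) :=
        Metric.closedBall_mem_nhds _ (by positivity)
      filter_upwards [mem_nhdsWithin_of_mem_nhds hmem, self_mem_nhdsWithin] with ζ hζb hζne
      have hζ0 : ζ ≠ 0 := hζne
      have hζa : 0 < Complex.abs ζ := by simpa using hζ0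
      have hζb' : Complex.abs ζ ≤ 1 / R := by
        simpa [Complex.dist_eq] using mem_closedBall.mp hζb
      have hRinv : R ≤ Complex.abs ζ⁻¹ := by
        rw [map_inv₀, le_inv_comm₀ (by linarith) hζa, ← one_div]
        linarith [hζb']
      have heq : g ζ - (Real.exp S.c : ℂ) = ζ * (S.F ζ⁻¹ - (Real.exp S.c : ℂ) * ζ⁻¹) := by
        rw [hg]
        field_simp
      rw [heq]
      have := hRM ζ⁻¹ hRinv
      calc ‖ζ * (S.F ζ⁻¹ - (Real.exp S.c : ℂ) * ζ⁻¹)‖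
          = Complex.abs ζ * Complex.abs (S.F ζ⁻¹ - (Real.exp S.c : ℂ) * ζ⁻¹) := by
            simp [Complex.norm_eq_abs]
        _ ≤ Complex.abs ζ * M := mul_le_mul_of_nonneg_left this hζa.le
        _ = M * ‖ζ‖ := by rw [Complex.norm_eq_abs]; ring
    · have : Filter.Tendsto (fun ζ : ℂ => M * ‖ζ‖) (nhds 0) (nhds 0) := by
        have h1 : Continuous (fun ζ : ℂ => M * ‖ζ‖) := by fun_prop
        have := h1.tendsto 0
        simpa using this
      exact this.mono_left nhdsWithin_le_nhds
  have hu0 : u 0 = (Real.exp S.c : ℂ) := by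
    rw [hu, Function.update_self]
    exact hlim.limUnder_eq
  -- max modulus
  set r₁ : ℝ := (1 + η)⁻¹ with hr₁
  have hr₁pos : 0 < r₁ := by rw [hr₁]; positivity
  have hr₁lt : r₁ < 1 := by
    rw [hr₁, inv_lt_one_iff₀]
    right; linarith
  have hcls : closure (Metric.ball (0:ℂ) r₁) ⊆ Metric.ball (0:ℂ) 1 := by
    rw [closure_ball 0 (ne_of_gt hr₁pos)]
    exact Metric.closedBall_subset_ball hr₁lt
  have hdc : DiffContOnCl ℂ u (Metric.ball (0:ℂ) r₁) :=
    DifferentiableOn.diffContOnCl (hudiff.mono hcls)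
  have hfr : ∀ ζ ∈ frontier (Metric.ball (0:ℂ) r₁), ‖u ζ‖ ≤ 1 + δ + ε := by
    rw [frontier_ball 0 (ne_of_gt hr₁pos)]
    intro ζ hζ
    have hζr : Complex.abs ζ = r₁ := by
      simpa [Complex.dist_eq] using mem_sphere.mp hζ
    have hζ0 : ζ ≠ 0 := by
      intro h
      rw [h] at hζr
      simp at hζr
      linarith
    have hζinv : Complex.abs ζ⁻¹ = 1 + η := by
      rw [map_inv₀, hζr, hr₁, inv_inv]
    have hFb : Complex.abs (S.F ζ⁻¹) ≤ 1 + δ + ε := by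
      apply Hη ζ⁻¹
      · rw [hζinv]; linarith
      · rw [hζinv]
    have huζ : u ζ = g ζ := Function.update_of_ne hζ0 _ _
    rw [huζ, hg]
    simp only [Complex.norm_eq_abs, map_mul]
    calc Complex.abs ζ * Complex.abs (S.F ζ⁻¹) ≤ 1 * (1 + δ + ε) := by
          apply mul_le_mul _ hFb (by positivity) (by norm_num)
          rw [hζr]; exact hr₁lt.le
      _ = 1 + δ + ε := one_mul _
  have hmax : ∀ ζ ∈ Metric.closedBall (0:ℂ) r₁, ‖u ζ‖ ≤ 1 + δ + ε := by
    intro ζ hζ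
    apply Complex.norm_le_of_forall_mem_frontier_norm_le isBounded_ball hdc hfr
    rw [closure_ball 0 (ne_of_gt hr₁pos)]
    exact hζ
  constructor
  · have := hmax 0 (mem_closedBall_self hr₁pos.le)
    rw [hu0] at this
    rwa [Complex.norm_real, Real.norm_eq_abs, abs_of_pos (Real.exp_pos _)] at this
  · intro z hz
    have hza : 0 < Complex.abs z := by linarith
    have hz0 : z ≠ 0 := by
      intro h; rw [h] at hza; simp at hza
    have hζmem : z⁻¹ ∈ Metric.closedBall (0:ℂ) r₁ := by
      simp only [mem_closedBall, Complex.dist_eq, sub_zero, Complex.norm_eq_abs, map_inv₀]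
      rw [hr₁]
      apply inv_anti₀ (by linarith) hz
    have hζ0 : z⁻¹ ≠ 0 := inv_ne_zero hz0
    have := hmax z⁻¹ hζmem
    rw [hu] at this
    rw [Function.update_of_ne hζ0] at this
    have hgz : g z⁻¹ = z⁻¹ * S.F z := by rw [hg]; simp [inv_inv]
    rw [hgz] at this
    simp only [Complex.norm_eq_abs, map_mul, map_inv₀] at this
    rw [inv_mul_le_iff₀ hza] at this
    linarith [this]

lemma lower (R M : ℝ) (hR : 2 ≤ R) (hM : 0 ≤ M)
    (hRM : ∀ z : ℂ, R ≤ Complex.abs z → Complex.abs (S.F z - (Real.exp S.c : ℂ) * z) ≤ M) :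
    ∀ z : ℂ, 1 < Complex.abs z → Complex.abs z ≤ Complex.abs (S.F z) := by
  have he1 := one_le_expc S
  set v : ℂ → ℂ := fun ζ => (S.F ζ⁻¹)⁻¹ with hv
  have hvd : DifferentiableOn ℂ v (Metric.ball (0:ℂ) 1 \ {0}) := by
    intro ζ hζ
    have hζ0 : ζ ≠ 0 := hζ.2
    have hζ1 : Complex.abs ζ < 1 := by
      simpa [Complex.dist_eq] using mem_ball.mp hζ.1
    have hζinv : (1:ℝ) < Complex.abs ζ⁻¹ := hinvD0 ζ hζ0 hζ1
    have : DifferentiableAt ℂ v ζ :=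
      ((F_diffAt S hζinv).comp ζ (differentiableAt_inv hζ0)).inv (F_ne S hζinv)
    exact this.differentiableWithinAt
  have hvb : ∀ ζ ∈ Metric.ball (0:ℂ) 1 \ {0}, Complex.abs (v ζ) ≤ 1 := by
    intro ζ hζ
    have hζ0 : ζ ≠ 0 := hζ.2
    have hζ1 : Complex.abs ζ < 1 := by
      simpa [Complex.dist_eq] using mem_ball.mp hζ.1
    have hζinv : (1:ℝ) < Complex.abs ζ⁻¹ := hinvD0 ζ hζ0 hζ1
    rw [hv]
    simp only [map_inv₀]
    have := F_abs S hζinv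
    rw [inv_le_one_iff₀]
    right; linarith
  set u₂ : ℂ → ℂ := Function.update v 0 (limUnder (nhdsWithin 0 {(0:ℂ)}ᶜ) v) with hu₂
  have hudiff : DifferentiableOn ℂ u₂ (Metric.ball (0:ℂ) 1) := by
    apply Complex.differentiableOn_update_limUnder_of_bddAbove
      (isOpen_ball.mem_nhds (by simp)) hvd
    refine ⟨1, ?_⟩
    rintro x ⟨ζ, hζ, rfl⟩
    simpa [Complex.norm_eq_abs] using hvb ζ hζ
  have hlim : Filter.Tendsto v (nhdsWithin 0 {(0:ℂ)}ᶜ) (nhds 0) := by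
    apply squeeze_zero_norm' (a := fun ζ : ℂ => 2 * ‖ζ‖)
    · set ρ : ℝ := min (1/R) (1/(2*M+1)) with hρ
      have hρpos : 0 < ρ := by
        rw [hρ]
        apply lt_min <;> positivity
      have hmem : Metric.closedBall (0:ℂ) ρ ∈ nhds (0:ℂ) :=
        Metric.closedBall_mem_nhds _ hρpos
      filter_upwards [mem_nhdsWithin_of_mem_nhds hmem, self_mem_nhdsWithin] with ζ hζb hζne
      have hζ0 : ζ ≠ 0 := hζne
      have hζa : 0 < Complex.abs ζ := by simpa using hζ0
      have hζb' : Complex.abs ζ ≤ ρ := by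
        simpa [Complex.dist_eq] using mem_closedBall.mp hζb
      have hinv1 : R ≤ Complex.abs ζ⁻¹ := by
        rw [map_inv₀, le_inv_comm₀ (by linarith) hζa, ← one_div]
        calc Complex.abs ζ ≤ ρ := hζb'
          _ ≤ 1/R := min_le_left _ _
      have hinv2 : 2*M+1 ≤ Complex.abs ζ⁻¹ := by
        rw [map_inv₀, le_inv_comm₀ (by positivity) hζa, ← one_div]
        calc Complex.abs ζ ≤ ρ := hζb'
          _ ≤ 1/(2*M+1) := min_le_right _ _
      have hFlow := F_low S R M hRM hinv1
      have hFg : Complex.abs ζ⁻¹ / 2 ≤ Complex.abs (S.F ζ⁻¹) := by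
        have h1 : Complex.abs ζ⁻¹ ≤ Real.exp S.c * Complex.abs ζ⁻¹ := by
          nlinarith [Complex.abs.nonneg ζ⁻¹]
        have h2 : Complex.abs ζ⁻¹ / 2 ≥ M := by linarith
        linarith
      have hhalf : 0 < Complex.abs ζ⁻¹ / 2 := by
        have : 0 < Complex.abs ζ⁻¹ := Complex.abs.pos (inv_ne_zero hζ0)
        linarith
      rw [hv]
      simp only [Complex.norm_eq_abs, map_inv₀]
      calc (Complex.abs (S.F ζ⁻¹))⁻¹ ≤ (Complex.abs ζ⁻¹ / 2)⁻¹ := by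
            apply inv_anti₀ hhalf
            rw [map_inv₀] at hFg ⊢
            exact hFg
        _ = 2 * Complex.abs ζ := by
            rw [map_inv₀]
            field_simp
    · have : Filter.Tendsto (fun ζ : ℂ => 2 * ‖ζ‖) (nhds 0) (nhds 0) := by
        have h1 : Continuous (fun ζ : ℂ => (2:ℝ) * ‖ζ‖) := by fun_prop
        have := h1.tendsto 0
        simpa using this
      exact this.mono_left nhdsWithin_le_nhds
  have hu0 : u₂ 0 = 0 := by
    rw [hu₂, Function.update_self]
    exact hlim.limUnder_eq
  have hmaps : Set.MapsTo u₂ (Metric.ball (0:ℂ) 1) (Metric.ball (0:ℂ) 1) := by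
    intro ζ hζ
    by_cases hζ0 : ζ = 0
    · rw [hζ0, hu0]
      exact mem_ball_self one_pos
    · have hζ1 : Complex.abs ζ < 1 := by
        simpa [Complex.dist_eq] using mem_ball.mp hζ
      have hζinv : (1:ℝ) < Complex.abs ζ⁻¹ := hinvD0 ζ hζ0 hζ1
      rw [hu₂, Function.update_of_ne hζ0, hv]
      simp only [mem_ball, Complex.dist_eq, sub_zero, Complex.norm_eq_abs, map_inv₀]
      rw [inv_lt_one_iff₀]
      right; exact F_abs S hζinv
  intro z hz
  have hza : 0 < Complex.abs z := by linarith
  have hz0 : z ≠ 0 := by intro h; rw [h] at hza; simp at hza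
  have hζlt : Complex.abs z⁻¹ < 1 := by
    rw [map_inv₀, inv_lt_one_iff₀]
    right; exact hz
  have hsch := Complex.norm_le_norm_of_mapsTo_ball hudiff (hmaps.mono_right Metric.ball_subset_closedBall) hu0 hζlt
  rw [hu₂, Function.update_of_ne (inv_ne_zero hz0), hv] at hsch
  simp only [inv_inv, Complex.norm_eq_abs, map_inv₀] at hsch
  have hFpos : 0 < Complex.abs (S.F z) := by linarith [F_abs S hz]
  rwa [inv_le_inv₀ hFpos hza] at hsch

lemma key (hδ : 0 < δ) :
    Real.exp S.c ≤ 1 + δ ∧ ∀ z : ℂ, 1 < Complex.abs z →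
      Complex.abs z ≤ Complex.abs (S.F z) ∧
        Complex.abs (S.F z) ≤ (1 + δ) * Complex.abs z := by
  obtain ⟨R₀, M₀, hRM₀⟩ := S.F_bound
  set R := max R₀ 2 with hRdef
  set M := max M₀ 0 with hMdef
  have hR : 2 ≤ R := le_max_right _ _
  have hM : 0 ≤ M := le_max_right _ _
  have hRM : ∀ z : ℂ, R ≤ Complex.abs z →
      Complex.abs (S.F z - (Real.exp S.c : ℂ) * z) ≤ M := by
    intro z hz
    exact le_trans (hRM₀ z (le_trans (le_max_left _ _) hz)) (le_max_left _ _)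
  constructor
  · apply le_of_forall_pos_le_add
    intro ε hε
    obtain ⟨η, hη, Hη⟩ := nearBoundary S hδ R M hR hM hRM hε
    have := (core_upper S R M hR hM hRM hε hη Hη hδ).1
    linarith
  · intro z hz
    refine ⟨lower S R M hR hM hRM z hz, ?_⟩
    apply le_of_forall_pos_le_add
    intro t ht
    have hza : 0 < Complex.abs z := by linarith
    set ε := t / Complex.abs z with hεdef
    have hε : 0 < ε := by positivity
    obtain ⟨η, hη, Hη⟩ := nearBoundary S hδ R M hR hM hRM hε
    set η' := min η (Complex.abs z - 1) with hη'def
    have hη' : 0 < η' := lt_min hη (by linarith)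
    have Hη' : ∀ w : ℂ, 1 < Complex.abs w → Complex.abs w ≤ 1 + η' →
        Complex.abs (S.F w) ≤ 1 + δ + ε := by
      intro w h1 h2
      apply Hη w h1
      have := min_le_left η (Complex.abs z - 1)
      linarith
    have h2 := (core_upper S R M hR hM hRM hε hη' Hη' hδ).2 z
      (by have h : η' ≤ Complex.abs z - 1 := hη'def ▸ min_le_right _ _
          linarith)
    have heps : ε * Complex.abs z = t := by
      rw [hεdef]; field_simp
    calc Complex.abs (S.F z) ≤ (1 + δ + ε) * Complex.abs z := h2
      _ = (1 + δ) * Complex.abs z + ε * Complex.abs z := by ring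
      _ = (1 + δ) * Complex.abs z + t := by rw [heps]

end HLCrude
lemma abs_argNeg_le_pi (z : ℂ) : |argNeg z| ≤ Real.pi := by
  unfold argNeg
  split
  · rw [abs_neg, abs_of_pos Real.pi_pos]
  · exact Complex.abs_arg_le_pi z

/-- **Lemma 3.3.** There is an absolute constant `C > 0` such that, for every
sufficiently small `δ > 0` and every randomised model with parameter `δ`,
almost surely `|X^σ_{k,n}(a)| ≤ C/√c` and `|Y^σ_{k,n}(a)| ≤ C/√c` for all
`σ > 0`, `a ∈ [-π, π)`, `n ≥ 1` and `1 ≤ k ≤ n`. -/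
theorem crude_bounds :
    ∃ C : ℝ, 0 < C ∧ ∃ δ₀ : ℝ, 0 < δ₀ ∧ ∀ δ : ℝ, 0 < δ → δ < δ₀ →
      ∀ (Ω : Type) (mΩ : MeasurableSpace Ω) (μ : @Measure Ω mΩ),
        @IsProbabilityMeasure Ω mΩ μ →
      ∀ H : @HLModel δ Ω mΩ μ, ∀ σ : ℝ, 0 < σ →
      ∀ a ∈ Set.Ico (-Real.pi) Real.pi, ∀ n k : ℕ, 1 ≤ k → k ≤ n →
        ∀ᵐ ω ∂μ, |H.X σ a k n ω| ≤ C / Real.sqrt H.c ∧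
          |H.Y σ a k n ω| ≤ C / Real.sqrt H.c := by
  refine ⟨Real.pi, Real.pi_pos, 1/2, by norm_num, ?_⟩
  intro δ hδ0 hδhalf Ω mΩ μ hμ H σ hσ a ha n k hk1 hkn
  obtain ⟨hec, hF⟩ := HLCrude.key H.toHLSetup hδ0
  refine Filter.Eventually.of_forall (fun ω => ?_)
  have hZc : ∀ j : ℕ, 1 < Complex.abs (H.Zc σ a n ω j) := by
    intro j
    induction j with
    | zero =>
      show 1 < Complex.abs (Complex.exp ((a : ℂ) * Complex.I + (σ : ℂ)))
      rw [Complex.abs_exp']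
      have hre : ((a : ℂ) * Complex.I + (σ : ℂ)).re = σ := by simp
      rw [hre, show (1:ℝ) = Real.exp 0 from Real.exp_zero.symm]
      exact Real.exp_lt_exp.mpr hσ
    | succ j ih =>
      show 1 < Complex.abs (H.Fk (n - j) ω (H.Zc σ a n ω j))
      rw [HLModel.Fk, map_mul, Complex.abs_exp_ofReal_mul_I, one_mul]
      apply HLCrude.F_abs H.toHLSetup
      rw [map_mul]
      have h1 : Complex.abs (Complex.exp (-((H.Θ (n - j) ω : ℂ) * Complex.I))) = 1 := by
        rw [Complex.abs_exp']; simp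
      rw [h1, one_mul]
      exact ih
  have hZ : 1 < Complex.abs (H.Z σ a k n ω) := hZc (n - k)
  have hcpos := H.c_pos
  have hsq : 0 < Real.sqrt H.c := Real.sqrt_pos.mpr hcpos
  have hcle : H.c ≤ δ := by
    have h1 : H.c ≤ Real.log (1 + δ) := (Real.le_log_iff_exp_le (by linarith)).mpr hec
    have h2 : Real.log (1 + δ) ≤ δ := by
      have := Real.log_le_sub_one_of_pos (show (0:ℝ) < 1 + δ by linarith)
      linarith
    linarith
  have hπ3 := Real.pi_gt_three
  constructor
  · show |H.X σ a k n ω| ≤ Real.pi / Real.sqrt H.c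
    rw [HLModel.X]
    set w := Complex.exp (-((H.Θ k ω : ℂ) * Complex.I)) * H.Z σ a k n ω with hw
    have hwabs : Complex.abs w = Complex.abs (H.Z σ a k n ω) := by
      rw [hw, map_mul, Complex.abs_exp']
      simp
    have hw1 : 1 < Complex.abs w := by rw [hwabs]; exact hZ
    obtain ⟨hlow, hup⟩ := hF w hw1
    have hwpos : 0 < Complex.abs w := by linarith
    have habsq : Complex.abs (H.F w / w) = Complex.abs (H.F w) / Complex.abs w :=
      map_div₀ _ _ _
    have hq1 : 1 ≤ Complex.abs (H.F w / w) := by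
      rw [habsq, le_div_iff₀ hwpos]
      linarith
    have hq2 : Complex.abs (H.F w / w) ≤ 1 + δ := by
      rw [habsq, div_le_iff₀ hwpos]
      linarith
    have hlogq1 : 0 ≤ Real.log (Complex.abs (H.F w / w)) := Real.log_nonneg hq1
    have hlogq2 : Real.log (Complex.abs (H.F w / w)) ≤ δ := by
      have h1 : Real.log (Complex.abs (H.F w / w)) ≤ Real.log (1 + δ) :=
        Real.log_le_log (by linarith) hq2
      have h2 : Real.log (1 + δ) ≤ δ := by
        have := Real.log_le_sub_one_of_pos (show (0:ℝ) < 1 + δ by linarith)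
        linarith
      linarith
    have hmid : |Real.log (Complex.abs (H.F w / w)) - H.c| ≤ Real.pi := by
      rw [abs_sub_le_iff]
      constructor <;> linarith
    rw [abs_mul, abs_of_nonneg (inv_nonneg.mpr hsq.le)]
    calc (Real.sqrt H.c)⁻¹ * |Real.log (Complex.abs (H.F w / w)) - H.c|
        ≤ (Real.sqrt H.c)⁻¹ * Real.pi :=
          mul_le_mul_of_nonneg_left hmid (inv_nonneg.mpr hsq.le)
      _ = Real.pi / Real.sqrt H.c := by rw [div_eq_mul_inv, mul_comm]
  · show |H.Y σ a k n ω| ≤ Real.pi / Real.sqrt H.c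
    rw [HLModel.Y]
    rw [abs_mul, abs_of_nonneg (inv_nonneg.mpr hsq.le)]
    calc (Real.sqrt H.c)⁻¹ * |argNeg _| ≤ (Real.sqrt H.c)⁻¹ * Real.pi :=
          mul_le_mul_of_nonneg_left (abs_argNeg_le_pi _) (inv_nonneg.mpr hsq.le)
      _ = Real.pi / Real.sqrt H.c := by rw [div_eq_mul_inv, mul_comm]
end
end

section
/- For all σ > 0, all 0 < s ≤ t, and all a ∈ [−π, π): (1/2π) ∫_σ^{σ+s} ∫_{−π}^{π} P_{e^{−(t−s)−x}}(a−θ)·P_{e^{−x}}(θ) dθ dx − s = Re(Log(1 − e^{−2σ−(t+s)+ia}) − Log(1 − e^{−2σ−(t−s)+ia})), and (1/2π) ∫_σ^{σ+s} ∫_{−π}^{π} P_{e^{−(t−s)−x}}(a−θ)·Q_{e^{−x}}(θ) dθ dx = Im(Log(1 − e^{−2σ−(t+s)+ia}) − Log(1 − e^{−2σ−(t−s)+ia})), where Log denotes the principal branch of the complex logarithm. -/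
open MeasureTheory ProbabilityTheory Filter Topology

noncomputable section

/-- The Poisson kernel `P_r(θ) = Re((1 + r e^{iθ})/(1 - r e^{iθ}))` of the unit disc. -/
def Pker (r θ : ℝ) : ℝ :=
  (((1 : ℂ) + (r : ℂ) * Complex.exp ((θ : ℂ) * Complex.I)) /
    ((1 : ℂ) - (r : ℂ) * Complex.exp ((θ : ℂ) * Complex.I))).re

/-- The conjugate Poisson kernel `Q_r(θ) = Im((1 + r e^{iθ})/(1 - r e^{iθ}))`. -/
def Qker (r θ : ℝ) : ℝ :=
  (((1 : ℂ) + (r : ℂ) * Complex.exp ((θ : ℂ) * Complex.I)) /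
    ((1 : ℂ) - (r : ℂ) * Complex.exp ((θ : ℂ) * Complex.I))).im

open Complex

set_option maxHeartbeats 1000000

lemma cauchy_unit {q : ℂ → ℂ} (hq : DiffContOnCl ℂ q (Metric.ball 0 1))
    {w : ℂ} (hw : ‖w‖ < 1) :
    ∫ θ in (0:ℝ)..(2*Real.pi),
      Complex.exp (θ * I) / (Complex.exp (θ * I) - w) * q (Complex.exp (θ * I))
      = 2 * Real.pi * q w := by
  have h := hq.circleIntegral_sub_inv_smul (w := w) (by simpa using hw)
  rw [circleIntegral] at h
  simp only [deriv_circleMap, circleMap, ofReal_one, one_mul, zero_add, smul_eq_mul] at h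
  have h2 : I * ∫ θ in (0:ℝ)..(2*Real.pi),
      Complex.exp (θ * I) / (Complex.exp (θ * I) - w) * q (Complex.exp (θ * I))
      = I * (2 * Real.pi * q w) := by
    rw [← intervalIntegral.integral_const_mul,
      show I * (2 * (Real.pi:ℂ) * q w) = 2 * Real.pi * I * q w by ring, ← h]
    apply intervalIntegral.integral_congr
    intro θ _
    have hne : Complex.exp (θ * I) - w ≠ 0 := by
      intro hc
      have h1 : ‖Complex.exp ((θ:ℂ) * I)‖ = 1 := Complex.norm_exp_ofReal_mul_I θ
      rw [sub_eq_zero] at hc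
      rw [hc] at h1
      exact absurd h1 (by linarith)
    field_simp
  exact mul_left_cancel₀ I_ne_zero h2

lemma one_sub_ne {c w : ℂ} (hc : ‖c‖ < 1) (hw : ‖w‖ ≤ 1) :
    1 - c * w ≠ 0 := by
  intro h
  have : ‖c * w‖ = 1 := by
    rw [sub_eq_zero] at h; rw [← h]; simp
  rw [norm_mul] at this
  nlinarith [norm_nonneg c, norm_nonneg w]

lemma exp_I_periodic : Function.Periodic (fun θ : ℝ => Complex.exp ((θ:ℂ) * I)) (2*Real.pi) := by
  intro θ
  push_cast
  rw [add_mul, Complex.exp_add]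
  simp [Complex.exp_two_pi_mul_I]

lemma inner_conv (r₁ r₂ a : ℝ) (h₁ : 0 ≤ r₁) (h₁' : r₁ < 1) (h₂ : 0 ≤ r₂) (h₂' : r₂ < 1) :
    (∫ θ in (-Real.pi)..Real.pi,
      ((Pker r₁ (a - θ) : ℂ) *
        ((1 + (r₂:ℂ) * Complex.exp ((θ:ℂ) * I)) / (1 - (r₂:ℂ) * Complex.exp ((θ:ℂ) * I)))))
      = 2 * Real.pi *
        ((1 + ((r₁*r₂ : ℝ):ℂ) * Complex.exp ((a:ℂ) * I)) /
          (1 - ((r₁*r₂ : ℝ):ℂ) * Complex.exp ((a:ℂ) * I))) := by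
  set z : ℂ := (r₁:ℂ) * Complex.exp ((a:ℂ) * I) with hz
  have habsz : ‖z‖ < 1 := by
    rw [hz, norm_mul, Complex.norm_exp_ofReal_mul_I, mul_one, Complex.norm_real, Real.norm_eq_abs,
      _root_.abs_of_nonneg h₁]
    exact h₁'
  have habsz' : ‖starRingEnd ℂ z‖ < 1 := by rwa [Complex.norm_conj]
  have habsr₂ : ‖(r₂:ℂ)‖ < 1 := by
    rw [Complex.norm_real, Real.norm_eq_abs, _root_.abs_of_nonneg h₂]; exact h₂'
  set g : ℂ → ℂ := fun w => (1 + (r₂:ℂ) * w) / (1 - (r₂:ℂ) * w) with hg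
  set q : ℂ → ℂ := fun w => g w / (1 - (starRingEnd ℂ z) * w) - g w with hq
  -- differentiability
  have hgd : DiffContOnCl ℂ g (Metric.ball 0 1) := by
    apply DifferentiableOn.diffContOnCl
    rw [closure_ball (0:ℂ) one_ne_zero]
    intro w hw
    simp only [Metric.mem_closedBall, dist_zero_right] at hw
    exact (show DifferentiableAt ℂ g w from ((differentiableAt_const _).add
      ((differentiableAt_const _).mul differentiableAt_id)).div
      ((differentiableAt_const _).sub
        ((differentiableAt_const _).mul differentiableAt_id))
      (one_sub_ne habsr₂ hw)).differentiableWithinAt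
  have hqd : DiffContOnCl ℂ q (Metric.ball 0 1) := by
    apply DifferentiableOn.diffContOnCl
    rw [closure_ball (0:ℂ) one_ne_zero]
    intro w hw
    simp only [Metric.mem_closedBall, dist_zero_right] at hw
    have hgw : DifferentiableAt ℂ g w :=
      (((differentiableAt_const _).add
        ((differentiableAt_const _).mul differentiableAt_id)).div
        ((differentiableAt_const _).sub
          ((differentiableAt_const _).mul differentiableAt_id))
        (one_sub_ne habsr₂ hw))
    exact ((hgw.div ((differentiableAt_const _).sub
        ((differentiableAt_const _).mul differentiableAt_id))
        (one_sub_ne habsz' hw)).sub hgw).differentiableWithinAt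
  -- pointwise identity
  have hpt : ∀ θ : ℝ,
      (Pker r₁ (a - θ) : ℂ) *
        ((1 + (r₂:ℂ) * Complex.exp ((θ:ℂ) * I)) / (1 - (r₂:ℂ) * Complex.exp ((θ:ℂ) * I)))
      = Complex.exp ((θ:ℂ) * I) / (Complex.exp ((θ:ℂ) * I) - z) * g (Complex.exp ((θ:ℂ) * I))
        + Complex.exp ((θ:ℂ) * I) / (Complex.exp ((θ:ℂ) * I) - 0) * q (Complex.exp ((θ:ℂ) * I)) := by
    intro θ
    set w : ℂ := Complex.exp ((θ:ℂ) * I) with hw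
    have habsw : ‖w‖ = 1 := Complex.norm_exp_ofReal_mul_I θ
    have hwne : w ≠ 0 := by
      intro h; rw [h] at habsw; simp at habsw
    have hwz : w - z ≠ 0 := by
      intro h; rw [sub_eq_zero] at h; rw [← h] at habsz; rw [habsw] at habsz; linarith
    have h1 : (1:ℂ) - (starRingEnd ℂ z) * w ≠ 0 := one_sub_ne habsz' habsw.le
    have h2 : (1:ℂ) - (r₂:ℂ) * w ≠ 0 := one_sub_ne habsr₂ habsw.le
    -- express Pker as complex combination
    have hu : ((r₁:ℂ) * Complex.exp (((a - θ : ℝ):ℂ) * I)) * w = z := by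
      rw [hz, hw]
      push_cast
      rw [mul_assoc, ← Complex.exp_add]
      ring_nf
    have hconj : starRingEnd ℂ ((r₁:ℂ) * Complex.exp (((a - θ : ℝ):ℂ) * I)) =
        (starRingEnd ℂ z) * w := by
      have hww : starRingEnd ℂ w * w = 1 := by
        rw [← Complex.normSq_eq_conj_mul_self, ← Complex.sq_norm, habsw]; norm_num
      have : (starRingEnd ℂ z) * w = starRingEnd ℂ ((r₁:ℂ) * Complex.exp (((a - θ : ℝ):ℂ) * I)) := by
        rw [← hu, map_mul _ ((r₁:ℂ) * Complex.exp (((a - θ : ℝ):ℂ) * I)) w,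
          mul_assoc, hww, mul_one]
      exact this.symm
    set u : ℂ := (r₁:ℂ) * Complex.exp (((a - θ : ℝ):ℂ) * I) with hu'
    have habsu : ‖u‖ < 1 := by
      rw [hu', norm_mul, Complex.norm_exp_ofReal_mul_I, mul_one, Complex.norm_real, Real.norm_eq_abs,
        _root_.abs_of_nonneg h₁]; exact h₁'
    have h3 : (1:ℂ) - u ≠ 0 := by
      have := one_sub_ne habsu (le_of_eq norm_one)
      simpa using this
    have hP : (Pker r₁ (a - θ) : ℂ) = ((1+u)/(1-u) + (1 + (starRingEnd ℂ z)*w)/(1 - (starRingEnd ℂ z)*w))/2 := by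
      have : ((((1:ℂ)+u)/(1-u)).re : ℂ) = ((1+u)/(1-u) + starRingEnd ℂ ((1+u)/(1-u)))/2 := by
        rw [Complex.add_conj]
        push_cast
        ring
      rw [Pker, this]
      congr 2
      rw [map_div₀, map_add, map_one, map_sub, map_one, hconj]
    rw [hP, hq, hg]
    have huw : u = z / w := by
      rw [← hu]; field_simp
    rw [huw]
    have h1' : 1 - w * starRingEnd ℂ z ≠ 0 := by rwa [mul_comm]
    have h2' : 1 - w * (r₂:ℂ) ≠ 0 := by rwa [mul_comm]
    field_simp [hwne, hwz, h1, h2, h1', h2']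
    ring
  -- periodicity
  have hper : Function.Periodic (fun θ : ℝ =>
      (Pker r₁ (a - θ) : ℂ) *
        ((1 + (r₂:ℂ) * Complex.exp ((θ:ℂ) * I)) / (1 - (r₂:ℂ) * Complex.exp ((θ:ℂ) * I))))
      (2*Real.pi) := by
    intro θ
    have e1 : Complex.exp (((θ + 2*Real.pi : ℝ):ℂ) * I) = Complex.exp ((θ:ℂ) * I) :=
      exp_I_periodic θ
    have e2 : Pker r₁ (a - (θ + 2*Real.pi)) = Pker r₁ (a - θ) := by
      have e3 : Complex.exp (((a - (θ + 2*Real.pi) : ℝ):ℂ) * I) =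
          Complex.exp (((a - θ : ℝ):ℂ) * I) := by
        have h := exp_I_periodic (a - (θ + 2*Real.pi))
        simp only at h
        rw [show a - (θ + 2*Real.pi) + 2*Real.pi = a - θ from by ring] at h
        exact h.symm
      rw [Pker, Pker, e3]
    simp only [e1, e2]
  have hshift : (∫ θ in (-Real.pi)..Real.pi,
      ((Pker r₁ (a - θ) : ℂ) *
        ((1 + (r₂:ℂ) * Complex.exp ((θ:ℂ) * I)) / (1 - (r₂:ℂ) * Complex.exp ((θ:ℂ) * I)))))
      = ∫ θ in (0:ℝ)..(2*Real.pi),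
      ((Pker r₁ (a - θ) : ℂ) *
        ((1 + (r₂:ℂ) * Complex.exp ((θ:ℂ) * I)) / (1 - (r₂:ℂ) * Complex.exp ((θ:ℂ) * I)))) := by
    have := hper.intervalIntegral_add_eq (-Real.pi) 0
    rw [show -Real.pi + 2*Real.pi = Real.pi by ring, zero_add] at this
    exact this
  rw [hshift]
  rw [intervalIntegral.integral_congr (g := fun θ =>
      Complex.exp ((θ:ℂ) * I) / (Complex.exp ((θ:ℂ) * I) - z) * g (Complex.exp ((θ:ℂ) * I))
        + Complex.exp ((θ:ℂ) * I) / (Complex.exp ((θ:ℂ) * I) - 0) * q (Complex.exp ((θ:ℂ) * I)))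
      (fun θ _ => hpt θ)]
  -- integrability of the two pieces
  have hcexp : Continuous fun θ : ℝ => Complex.exp ((θ:ℂ) * I) :=
    (Complex.continuous_ofReal.mul continuous_const).cexp
  have hne1 : ∀ θ : ℝ, Complex.exp ((θ:ℂ) * I) - z ≠ 0 := by
    intro θ h
    rw [sub_eq_zero] at h
    have := Complex.norm_exp_ofReal_mul_I θ
    rw [h] at this; rw [this] at habsz; linarith
  have hne0 : ∀ θ : ℝ, Complex.exp ((θ:ℂ) * I) - 0 ≠ 0 := by
    intro θ; simpa using Complex.exp_ne_zero _
  have hgc : Continuous fun θ : ℝ => g (Complex.exp ((θ:ℂ) * I)) := by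
    apply Continuous.div
    · exact continuous_const.add (continuous_const.mul hcexp)
    · exact continuous_const.sub (continuous_const.mul hcexp)
    · intro θ; exact one_sub_ne habsr₂ (Complex.norm_exp_ofReal_mul_I θ).le
  have hqc : Continuous fun θ : ℝ => q (Complex.exp ((θ:ℂ) * I)) := by
    apply Continuous.sub
    · apply Continuous.div hgc
      · exact continuous_const.sub (continuous_const.mul hcexp)
      · intro θ; exact one_sub_ne habsz' (Complex.norm_exp_ofReal_mul_I θ).le
    · exact hgc
  have hi1 : IntervalIntegrable (fun θ : ℝ =>
      Complex.exp ((θ:ℂ) * I) / (Complex.exp ((θ:ℂ) * I) - z) * g (Complex.exp ((θ:ℂ) * I)))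
      volume 0 (2*Real.pi) :=
    ((hcexp.div (hcexp.sub continuous_const) hne1).mul hgc).intervalIntegrable _ _
  have hi2 : IntervalIntegrable (fun θ : ℝ =>
      Complex.exp ((θ:ℂ) * I) / (Complex.exp ((θ:ℂ) * I) - 0) * q (Complex.exp ((θ:ℂ) * I)))
      volume 0 (2*Real.pi) :=
    ((hcexp.div (hcexp.sub continuous_const) hne0).mul hqc).intervalIntegrable _ _
  rw [intervalIntegral.integral_add hi1 hi2]
  rw [cauchy_unit hgd habsz, cauchy_unit hqd (by simp : ‖(0:ℂ)‖ < 1)]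
  have hq0 : q 0 = 0 := by
    rw [hq]; simp
  rw [hq0, mul_zero, add_zero]
  rw [hg]
  push_cast
  rw [hz]
  ring_nf

lemma Pker_cont (r a : ℝ) (hr : |r| < 1) :
    Continuous fun θ : ℝ => ((1 : ℂ) + (r : ℂ) * Complex.exp (((a - θ : ℝ):ℂ) * I)) /
      ((1 : ℂ) - (r : ℂ) * Complex.exp (((a - θ : ℝ):ℂ) * I)) := by
  have hc : Continuous fun θ : ℝ => Complex.exp (((a - θ : ℝ):ℂ) * I) :=
    ((Complex.continuous_ofReal.comp (continuous_const.sub continuous_id)).mul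
      continuous_const).cexp
  apply Continuous.div
  · exact continuous_const.add (continuous_const.mul hc)
  · exact continuous_const.sub (continuous_const.mul hc)
  · intro θ
    apply one_sub_ne _ (Complex.norm_exp_ofReal_mul_I _).le
    rwa [Complex.norm_real, Real.norm_eq_abs]

lemma f_integrable (r₁ r₂ a : ℝ) (h₁ : 0 ≤ r₁) (h₁' : r₁ < 1) (h₂ : 0 ≤ r₂) (h₂' : r₂ < 1)
    (b c : ℝ) :
    IntervalIntegrable (fun θ : ℝ => (Pker r₁ (a - θ) : ℂ) *
      ((1 + (r₂:ℂ) * Complex.exp ((θ:ℂ) * I)) / (1 - (r₂:ℂ) * Complex.exp ((θ:ℂ) * I))))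
      volume b c := by
  apply Continuous.intervalIntegrable
  apply Continuous.mul
  · apply Complex.continuous_ofReal.comp
    exact Complex.continuous_re.comp (Pker_cont r₁ a (by rwa [_root_.abs_of_nonneg h₁]))
  · have hc : Continuous fun θ : ℝ => Complex.exp ((θ:ℂ) * I) :=
      (Complex.continuous_ofReal.mul continuous_const).cexp
    apply Continuous.div
    · exact continuous_const.add (continuous_const.mul hc)
    · exact continuous_const.sub (continuous_const.mul hc)
    · intro θ
      apply one_sub_ne _ (Complex.norm_exp_ofReal_mul_I _).le
      rw [Complex.norm_real, Real.norm_eq_abs, _root_.abs_of_nonneg h₂]; exact h₂'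

lemma inner_P (r₁ r₂ a : ℝ) (h₁ : 0 ≤ r₁) (h₁' : r₁ < 1) (h₂ : 0 ≤ r₂) (h₂' : r₂ < 1) :
    ∫ θ in (-Real.pi)..Real.pi, Pker r₁ (a - θ) * Pker r₂ θ
      = 2 * Real.pi * Pker (r₁*r₂) a := by
  have hint := f_integrable r₁ r₂ a h₁ h₁' h₂ h₂' (-Real.pi) Real.pi
  have h1 : ∫ θ in (-Real.pi)..Real.pi, Pker r₁ (a - θ) * Pker r₂ θ
      = ∫ θ in (-Real.pi)..Real.pi, Complex.reCLM ((Pker r₁ (a - θ) : ℂ) *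
        ((1 + (r₂:ℂ) * Complex.exp ((θ:ℂ) * I)) / (1 - (r₂:ℂ) * Complex.exp ((θ:ℂ) * I)))) := by
    apply intervalIntegral.integral_congr
    intro θ _
    simp only [Complex.reCLM_apply, Complex.re_ofReal_mul]
    rfl
  rw [h1, Complex.reCLM.intervalIntegral_comp_comm hint,
    inner_conv r₁ r₂ a h₁ h₁' h₂ h₂']
  simp only [Complex.reCLM_apply]
  rw [show (2 : ℂ) * (Real.pi : ℂ) = ((2 * Real.pi : ℝ) : ℂ) by push_cast; ring,
    Complex.re_ofReal_mul]
  rfl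

lemma inner_Q (r₁ r₂ a : ℝ) (h₁ : 0 ≤ r₁) (h₁' : r₁ < 1) (h₂ : 0 ≤ r₂) (h₂' : r₂ < 1) :
    ∫ θ in (-Real.pi)..Real.pi, Pker r₁ (a - θ) * Qker r₂ θ
      = 2 * Real.pi * Qker (r₁*r₂) a := by
  have hint := f_integrable r₁ r₂ a h₁ h₁' h₂ h₂' (-Real.pi) Real.pi
  have h1 : ∫ θ in (-Real.pi)..Real.pi, Pker r₁ (a - θ) * Qker r₂ θ
      = ∫ θ in (-Real.pi)..Real.pi, Complex.imCLM ((Pker r₁ (a - θ) : ℂ) *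
        ((1 + (r₂:ℂ) * Complex.exp ((θ:ℂ) * I)) / (1 - (r₂:ℂ) * Complex.exp ((θ:ℂ) * I)))) := by
    apply intervalIntegral.integral_congr
    intro θ _
    simp only [Complex.imCLM_apply, Complex.im_ofReal_mul]
    rfl
  rw [h1, Complex.imCLM.intervalIntegral_comp_comm hint,
    inner_conv r₁ r₂ a h₁ h₁' h₂ h₂']
  simp only [Complex.imCLM_apply]
  rw [show (2 : ℂ) * (Real.pi : ℂ) = ((2 * Real.pi : ℝ) : ℂ) by push_cast; ring,
    Complex.im_ofReal_mul]
  rfl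

lemma outer_integral (b a σ s : ℝ) (hb : 0 ≤ b) (hσ : 0 < σ) (hs : 0 < s) :
    ∫ x in σ..(σ+s),
        (1 + Complex.exp (((-b - 2*x : ℝ):ℂ) + (a:ℂ) * I)) /
          (1 - Complex.exp (((-b - 2*x : ℝ):ℂ) + (a:ℂ) * I))
      = s + (Complex.log (1 - Complex.exp (((-b - 2*(σ+s) : ℝ):ℂ) + (a:ℂ) * I))
          - Complex.log (1 - Complex.exp (((-b - 2*σ : ℝ):ℂ) + (a:ℂ) * I))) := by
  set E : ℝ → ℂ := fun x => Complex.exp (((-b - 2*x : ℝ):ℂ) + (a:ℂ) * I) with hE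
  have habs : ∀ x : ℝ, 0 < x → ‖E x‖ < 1 := by
    intro x hx
    rw [hE]
    simp only [Complex.norm_exp]
    rw [Complex.add_re, Complex.ofReal_re, Complex.mul_re, Complex.I_re, Complex.I_im]
    simp only [Complex.ofReal_im, Complex.ofReal_re, mul_zero, mul_one, zero_sub, add_neg_lt_iff_lt_add]
    calc Real.exp (-b - 2*x + -0) < Real.exp 0 := by
          apply Real.exp_lt_exp.mpr; nlinarith
      _ = 1 := Real.exp_zero
  have hne : ∀ x : ℝ, 0 < x → 1 - E x ≠ 0 := by
    intro x hx h
    rw [sub_eq_zero] at h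
    have := habs x hx
    rw [← h] at this; simp at this
  have hre : ∀ x : ℝ, 0 < x → 0 < (1 - E x).re := by
    intro x hx
    rw [Complex.sub_re, Complex.one_re]
    have h1 : (E x).re ≤ ‖E x‖ := Complex.re_le_norm _
    have := habs x hx
    linarith
  have hEd : ∀ x : ℝ, HasDerivAt E (E x * (-2)) x := by
    intro x
    apply HasDerivAt.cexp
    have h1 : HasDerivAt (fun x : ℝ => -b - 2*x) (-2) x := by
      simpa using ((hasDerivAt_id x).const_mul (2:ℝ)).const_sub (-b)
    have h2 := h1.ofReal_comp.add_const ((a:ℂ) * I)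
    simpa using h2
  have key : ∀ x ∈ Set.uIcc σ (σ+s), HasDerivAt (fun x : ℝ => (x:ℂ) + Complex.log (1 - E x))
      ((1 + E x) / (1 - E x)) x := by
    intro x hx
    rw [Set.uIcc_of_le (by linarith : σ ≤ σ + s)] at hx
    have hxpos : 0 < x := lt_of_lt_of_le hσ hx.1
    have h1 : HasDerivAt (fun x => 1 - E x) (2 * E x) x := by
      simpa [mul_comm] using (hEd x).const_sub 1
    have h2 := h1.clog_real (Or.inl (hre x hxpos))
    have h3 := (Complex.ofRealCLM.hasDerivAt (x := x)).add h2
    have h4 : Complex.ofRealCLM 1 + 2 * E x / (1 - E x) = (1 + E x) / (1 - E x) := by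
      simp only [Complex.ofRealCLM_apply, Complex.ofReal_one]
      field_simp [hne x hxpos]
      ring
    rw [← h4]
    exact h3
  have hcont : IntervalIntegrable (fun x => (1 + E x) / (1 - E x)) volume σ (σ+s) := by
    apply ContinuousOn.intervalIntegrable
    have hEc : Continuous E := by
      apply Continuous.cexp
      apply Continuous.add _ continuous_const
      exact Complex.continuous_ofReal.comp (continuous_const.sub (continuous_const.mul continuous_id))
    apply ContinuousOn.div
    · exact (continuous_const.add hEc).continuousOn
    · exact (continuous_const.sub hEc).continuousOn
    · intro x hx
      rw [Set.uIcc_of_le (by linarith : σ ≤ σ + s)] at hx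
      exact hne x (lt_of_lt_of_le hσ hx.1)
  have := intervalIntegral.integral_eq_sub_of_hasDerivAt key hcont
  rw [this, hE]
  push_cast
  ring
-- assume previous lemmas; test main assembly pieces
lemma Pker_G (c a : ℝ) :
    (Pker (Real.exp c) a : ℝ) =
      ((1 + Complex.exp ((c:ℂ) + (a:ℂ) * I)) / (1 - Complex.exp ((c:ℂ) + (a:ℂ) * I))).re := by
  rw [Pker, Complex.ofReal_exp, ← Complex.exp_add]

lemma Qker_G (c a : ℝ) :
    (Qker (Real.exp c) a : ℝ) =
      ((1 + Complex.exp ((c:ℂ) + (a:ℂ) * I)) / (1 - Complex.exp ((c:ℂ) + (a:ℂ) * I))).im := by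
  rw [Qker, Complex.ofReal_exp, ← Complex.exp_add]


lemma G_facts (b a σ s : ℝ) (hb : 0 ≤ b) (hσ : 0 < σ) (hs : 0 < s) :
    IntervalIntegrable (fun x : ℝ =>
      (1 + Complex.exp (((-b - 2*x : ℝ):ℂ) + (a:ℂ) * I)) /
        (1 - Complex.exp (((-b - 2*x : ℝ):ℂ) + (a:ℂ) * I))) volume σ (σ+s) := by
  set E : ℝ → ℂ := fun x => Complex.exp (((-b - 2*x : ℝ):ℂ) + (a:ℂ) * I) with hE
  have habs : ∀ x : ℝ, 0 < x → ‖E x‖ < 1 := by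
    intro x hx
    rw [hE]
    simp only [Complex.norm_exp]
    rw [Complex.add_re, Complex.ofReal_re, Complex.mul_re, Complex.I_re, Complex.I_im]
    simp only [Complex.ofReal_im, Complex.ofReal_re, mul_zero, mul_one, zero_sub]
    calc Real.exp (-b - 2*x + -0) < Real.exp 0 := by
          apply Real.exp_lt_exp.mpr; nlinarith
      _ = 1 := Real.exp_zero
  have hne : ∀ x : ℝ, 0 < x → 1 - E x ≠ 0 := by
    intro x hx h
    rw [sub_eq_zero] at h
    have := habs x hx
    rw [← h] at this; simp at this
  apply ContinuousOn.intervalIntegrable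
  have hEc : Continuous E := by
    apply Continuous.cexp
    apply Continuous.add _ continuous_const
    exact Complex.continuous_ofReal.comp (continuous_const.sub (continuous_const.mul continuous_id))
  apply ContinuousOn.div
  · exact (continuous_const.add hEc).continuousOn
  · exact (continuous_const.sub hEc).continuousOn
  · intro x hx
    rw [Set.uIcc_of_le (by linarith : σ ≤ σ + s)] at hx
    exact hne x (lt_of_lt_of_le hσ hx.1)


/-- The limiting covariance computations: for `σ > 0`, `0 < s ≤ t` and
`a ∈ [-π, π)`,
`(1/2π) ∫_σ^{σ+s} ∫_{-π}^{π} P_{e^{-(t-s)-x}}(a-θ) P_{e^{-x}}(θ) dθ dx - s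
  = Re(Log(1 - e^{-2σ-(t+s)+ia}) - Log(1 - e^{-2σ-(t-s)+ia}))`
and
`(1/2π) ∫_σ^{σ+s} ∫_{-π}^{π} P_{e^{-(t-s)-x}}(a-θ) Q_{e^{-x}}(θ) dθ dx
  = Im(Log(1 - e^{-2σ-(t+s)+ia}) - Log(1 - e^{-2σ-(t-s)+ia}))`. -/
theorem covariance_integrals (σ s t a : ℝ) (hσ : 0 < σ) (hs : 0 < s) (hst : s ≤ t)
    (ha : a ∈ Set.Ico (-Real.pi) Real.pi) :
    ((2 * Real.pi)⁻¹ * ∫ x in σ..(σ + s), ∫ θ in (-Real.pi)..Real.pi,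
        Pker (Real.exp (-(t - s) - x)) (a - θ) * Pker (Real.exp (-x)) θ) - s
      = (Complex.log (1 - Complex.exp (((-2) * σ - (t + s) : ℝ) + (a : ℂ) * Complex.I))
          - Complex.log
              (1 - Complex.exp (((-2) * σ - (t - s) : ℝ) + (a : ℂ) * Complex.I))).re ∧
    (2 * Real.pi)⁻¹ * (∫ x in σ..(σ + s), ∫ θ in (-Real.pi)..Real.pi,
        Pker (Real.exp (-(t - s) - x)) (a - θ) * Qker (Real.exp (-x)) θ)
      = (Complex.log (1 - Complex.exp (((-2) * σ - (t + s) : ℝ) + (a : ℂ) * Complex.I))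
          - Complex.log
              (1 - Complex.exp (((-2) * σ - (t - s) : ℝ) + (a : ℂ) * Complex.I))).im := by
  have hb0 : (0:ℝ) ≤ t - s := by linarith
  have hcond : ∀ x ∈ Set.uIcc σ (σ+s), 0 < x := by
    intro x hx
    rw [Set.uIcc_of_le (by linarith : σ ≤ σ + s)] at hx
    linarith [hx.1]
  have hr₁ : ∀ x : ℝ, 0 < x → Real.exp (-(t-s) - x) < 1 := by
    intro x hx
    rw [Real.exp_lt_one_iff]
    linarith
  have hr₂ : ∀ x : ℝ, 0 < x → Real.exp (-x) < 1 := by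
    intro x hx
    rw [Real.exp_lt_one_iff]
    linarith
  have hEint := G_facts (t-s) a σ s hb0 hσ hs
  have houter := outer_integral (t-s) a σ s hb0 hσ hs
  have hexp1 : (-(t-s) - 2*(σ+s) : ℝ) = (-2) * σ - (t+s) := by ring
  have hexp2 : (-(t-s) - 2*σ : ℝ) = (-2) * σ - (t-s) := by ring
  rw [hexp1, hexp2] at houter
  have hargs : ∀ x : ℝ, Real.exp (-(t-s) - x) * Real.exp (-x) = Real.exp (-(t-s) - 2*x) := by
    intro x
    rw [← Real.exp_add]
    congr 1
    ring
  have hre := Complex.reCLM.intervalIntegral_comp_comm hEint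
  have him := Complex.imCLM.intervalIntegral_comp_comm hEint
  simp only [Complex.reCLM_apply] at hre
  simp only [Complex.imCLM_apply] at him
  have h2pi : (2 * Real.pi) ≠ 0 := by positivity
  constructor
  · have hinnerP : Set.EqOn
        (fun x => ∫ θ in (-Real.pi)..Real.pi,
          Pker (Real.exp (-(t-s)-x)) (a-θ) * Pker (Real.exp (-x)) θ)
        (fun x => 2 * Real.pi *
          ((1 + Complex.exp (((-(t-s) - 2*x : ℝ):ℂ) + (a:ℂ) * I)) /
            (1 - Complex.exp (((-(t-s) - 2*x : ℝ):ℂ) + (a:ℂ) * I))).re)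
        (Set.uIcc σ (σ+s)) := by
      intro x hx
      have hx0 := hcond x hx
      simp only
      rw [inner_P (Real.exp (-(t-s)-x)) (Real.exp (-x)) a (Real.exp_nonneg _)
        (hr₁ x hx0) (Real.exp_nonneg _) (hr₂ x hx0)]
      congr 1
      rw [hargs x, Pker_G]
    rw [intervalIntegral.integral_congr hinnerP, intervalIntegral.integral_const_mul,
      hre, houter]
    rw [← mul_assoc, inv_mul_cancel₀ h2pi, one_mul]
    simp [Complex.add_re, Complex.ofReal_re]
  · have hinnerQ : Set.EqOn
        (fun x => ∫ θ in (-Real.pi)..Real.pi,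
          Pker (Real.exp (-(t-s)-x)) (a-θ) * Qker (Real.exp (-x)) θ)
        (fun x => 2 * Real.pi *
          ((1 + Complex.exp (((-(t-s) - 2*x : ℝ):ℂ) + (a:ℂ) * I)) /
            (1 - Complex.exp (((-(t-s) - 2*x : ℝ):ℂ) + (a:ℂ) * I))).im)
        (Set.uIcc σ (σ+s)) := by
      intro x hx
      have hx0 := hcond x hx
      simp only
      rw [inner_Q (Real.exp (-(t-s)-x)) (Real.exp (-x)) a (Real.exp_nonneg _)
        (hr₁ x hx0) (Real.exp_nonneg _) (hr₂ x hx0)]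
      congr 1
      rw [hargs x, Qker_G]
    rw [intervalIntegral.integral_congr hinnerQ, intervalIntegral.integral_const_mul,
      him, houter]
    rw [← mul_assoc, inv_mul_cancel₀ h2pi, one_mul]
    simp [Complex.add_im, Complex.ofReal_im]
end
end
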